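/- Let E be a complex Hilbert space, let U be a unitary continuous linear operator on E, let P be the orthogonal projection onto a closed subspace K of E, set Q = 1 − P, and let ψ ∈ E with ‖ψ‖ = 1. For every natural number T, ∑_{t=1}^{T} ‖P (U ((Q ∘ U)^{t−1} ψ))‖² = 1 if and only if (Q ∘ U)^{T} ψ = 0. (This characterizes the paper's notion that a QTM with unitary time evolution U, final-state projection P_F = P, and initial configuration |c₀⟩ = ψ halts within time T, i.e., that its halting probabilities p(t) = ‖P U (Q U)^{t−1} ψ‖² satisfy ∑_{t=1}^{T} p(t) = 1.) -/

import Mathlib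

open Finset

/-- Since `V` is isometric and `P`, `Q` split the squared norm, `‖P (V x)‖² = ‖x‖² - ‖Q (V x)‖²`,
so the sum telescopes. -/
theorem sum_Icc_norm_sq_comp_pow_apply {R E : Type*} [Semiring R] [SeminormedAddCommGroup E]
    [Module R E] {V P Q : E →L[R] E} (hV : ∀ x, ‖V x‖ = ‖x‖)
    (hPQ : ∀ x, ‖x‖ ^ 2 = ‖P x‖ ^ 2 + ‖Q x‖ ^ 2) (ψ : E) (T : ℕ) :
    ∑ t ∈ Icc 1 T, ‖P (V (((Q.comp V) ^ (t - 1)) ψ))‖ ^ 2 =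
      ‖ψ‖ ^ 2 - ‖((Q.comp V) ^ T) ψ‖ ^ 2 := by
  induction T with
  | zero => simp
  | succ T ih =>
    have hstep : ((Q.comp V) ^ (T + 1)) ψ = Q (V (((Q.comp V) ^ T) ψ)) := by
      rw [pow_succ']
      rfl
    have hsplit := hPQ (V (((Q.comp V) ^ T) ψ))
    rw [hV] at hsplit
    rw [sum_Icc_succ_top (by omega), ih, hstep, Nat.add_sub_cancel]
    linarith

/-- Characterisation of halting within time `T`: for a unit initial state `ψ`,
`∑_{t=1}^{T} ‖P (U ((Q∘U)^{t−1} ψ))‖² = 1` iff `(Q∘U)^T ψ = 0`. -/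
theorem stmt5 {E : Type*} [NormedAddCommGroup E] [InnerProductSpace ℂ E] [CompleteSpace E]
    (U : E →L[ℂ] E) (hU : U ∈ unitary (E →L[ℂ] E))
    (K : Submodule ℂ E) [K.HasOrthogonalProjection]
    (P Q : E →L[ℂ] E)
    (hP : P = K.subtypeL.comp K.orthogonalProjectionOnto)
    (hQ : Q = 1 - P)
    (ψ : E) (hψ : ‖ψ‖ = 1) (T : ℕ) :
    (∑ t ∈ Finset.Icc 1 T, ‖P (U (((Q.comp U) ^ (t - 1)) ψ))‖ ^ 2) = 1 ↔
      ((Q.comp U) ^ T) ψ = 0 := by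
  have hP' : P = K.starProjection := hP
  have hQ' : Q = Kᗮ.starProjection := by rw [hQ, hP', K.starProjection_orthogonal']
  have hPQ : ∀ x, ‖x‖ ^ 2 = ‖P x‖ ^ 2 + ‖Q x‖ ^ 2 := fun x => by
    rw [hP', hQ']
    exact K.norm_sq_eq_add_norm_sq_starProjection x
  rw [sum_Icc_norm_sq_comp_pow_apply (U.norm_map_of_mem_unitary hU) hPQ, hψ, one_pow,
    sub_eq_self, sq_eq_zero_iff, norm_eq_zero]
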